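/- arXiv:1808.03116 — 5 statements merged into one kernel-verified Lean document; each statement's English description precedes it below -/
import Mathlib

section
/- Let (E, ρ, [·,·]) be an A-module with anchor and an almost Lie bracket, and let ∇ be an E-connection on E with torsion T and curvature R. Then for all X, Y, Z ∈ E the first Bianchi identity holds: Σ_cyc R(X,Y)Z = Σ_cyc (∇_X T)(Y,Z) + Σ_cyc T(T(X,Y),Z) + J(X,Y,Z), where (∇_X T)(Y,Z) := ∇_X(T(Y,Z)) − T(∇_X Y, Z) − T(Y, ∇_X Z), Σ_cyc denotes the sum over the three cyclic permutations of (X,Y,Z), and J is the Jacobiator of the bracket. -/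
/-! The first Bianchi identity is a purely additive identity: once `T` and `R` are expanded,
every term is a biadditive expression in `D` and the bracket, and the two sides agree after
using skew-symmetry of the bracket to turn `[∇_X Z, Y]`, `[[Y, Z], X]`, … into their
reversed forms. -/

namespace AlmostLieBracket

variable {E : Type*} [AddCommGroup E]

def torsion (br D : E →+ E →+ E) (X Y : E) : E :=
  D X Y - D Y X - br X Y

def curvature (br D : E →+ E →+ E) (X Y Z : E) : E :=
  D X (D Y Z) - D Y (D X Z) - D (br X Y) Z

/-- `(∇_X T)(Y, Z)`. -/
def covDerivTorsion (br D : E →+ E →+ E) (X Y Z : E) : E :=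
  D X (torsion br D Y Z) - torsion br D (D X Y) Z - torsion br D Y (D X Z)

def jacobiator (br : E →+ E →+ E) (X Y Z : E) : E :=
  br X (br Y Z) + br Y (br Z X) + br Z (br X Y)

theorem curvature_cyclic_sum (br D : E →+ E →+ E) (br_skew : ∀ X Y : E, br Y X = -br X Y)
    (X Y Z : E) :
    curvature br D X Y Z + curvature br D Y Z X + curvature br D Z X Y =
      (covDerivTorsion br D X Y Z + covDerivTorsion br D Y Z X + covDerivTorsion br D Z X Y)
      + (torsion br D (torsion br D X Y) Z + torsion br D (torsion br D Y Z) X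
          + torsion br D (torsion br D Z X) Y)
      + jacobiator br X Y Z := by
  simp only [curvature, covDerivTorsion, torsion, jacobiator, map_sub, AddMonoidHom.sub_apply]
  rw [br_skew (D X Z) Y, br_skew (D Y X) Z, br_skew (D Z Y) X,
    br_skew (br Y Z) X, br_skew (br Z X) Y, br_skew (br X Y) Z]
  abel

def toAddMonoidHom₂ (f : E → E → E) (addl : ∀ X X' Y : E, f (X + X') Y = f X Y + f X' Y)
    (addr : ∀ X Y Y' : E, f X (Y + Y') = f X Y + f X Y') : E →+ E →+ E :=
  AddMonoidHom.mk' (fun X => AddMonoidHom.mk' (f X) (addr X))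
    fun X X' => AddMonoidHom.ext (addl X X')

end AlmostLieBracket

theorem statement0_general
    {E : Type*} [AddCommGroup E]
    (br : E → E → E)
    (br_addl : ∀ X X' Y : E, br (X + X') Y = br X Y + br X' Y)
    (br_addr : ∀ X Y Y' : E, br X (Y + Y') = br X Y + br X Y')
    (br_skew : ∀ X Y : E, br Y X = - br X Y)
    (D : E → E → E)
    (D_addl : ∀ X X' Y : E, D (X + X') Y = D X Y + D X' Y)
    (D_addr : ∀ X Y Y' : E, D X (Y + Y') = D X Y + D X Y')
    (T : E → E → E) (hT : ∀ X Y : E, T X Y = D X Y - D Y X - br X Y)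
    (R : E → E → E → E)
    (hR : ∀ X Y Z : E, R X Y Z = D X (D Y Z) - D Y (D X Z) - D (br X Y) Z)
    (X Y Z : E) :
    R X Y Z + R Y Z X + R Z X Y =
      ((D X (T Y Z) - T (D X Y) Z - T Y (D X Z))
        + (D Y (T Z X) - T (D Y Z) X - T Z (D Y X))
        + (D Z (T X Y) - T (D Z X) Y - T X (D Z Y)))
      + (T (T X Y) Z + T (T Y Z) X + T (T Z X) Y)
      + (br X (br Y Z) + br Y (br Z X) + br Z (br X Y)) := by
  let brₕ := AlmostLieBracket.toAddMonoidHom₂ br br_addl br_addr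
  let Dₕ := AlmostLieBracket.toAddMonoidHom₂ D D_addl D_addr
  obtain rfl : T = AlmostLieBracket.torsion brₕ Dₕ := funext₂ hT
  obtain rfl : R = AlmostLieBracket.curvature brₕ Dₕ := funext₃ hR
  exact AlmostLieBracket.curvature_cyclic_sum brₕ Dₕ br_skew X Y Z

/-- first Bianchi identity.  Let `A` be a commutative ℝ-algebra, `E` an
`A`-module with an anchor `ρ : E → Der_ℝ(A)` and an almost Lie bracket `br` (ℝ-bilinear,
skew-symmetric, satisfying the Leibniz rule), and let `D` be an `E`-connection on `E` with
torsion `T` and curvature `R`.  Then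
`Σ_cyc R(X,Y)Z = Σ_cyc (∇_X T)(Y,Z) + Σ_cyc T(T(X,Y),Z) + J(X,Y,Z)`. -/
theorem statement0
    {A : Type*} [CommRing A] [Algebra ℝ A]
    {E : Type*} [AddCommGroup E] [Module A E] [Module ℝ E] [IsScalarTower ℝ A E]
    (ρ : E →ₗ[A] Derivation ℝ A A) (br : E → E → E)
    (br_addl : ∀ X X' Y : E, br (X + X') Y = br X Y + br X' Y)
    (br_addr : ∀ X Y Y' : E, br X (Y + Y') = br X Y + br X Y')
    (br_smull : ∀ (c : ℝ) (X Y : E), br (c • X) Y = c • br X Y)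
    (br_smulr : ∀ (c : ℝ) (X Y : E), br X (c • Y) = c • br X Y)
    (br_skew : ∀ X Y : E, br Y X = - br X Y)
    (br_leib : ∀ (f : A) (X Y : E), br X (f • Y) = ρ X f • Y + f • br X Y)
    (D : E → E → E)
    (D_addl : ∀ X X' Y : E, D (X + X') Y = D X Y + D X' Y)
    (D_smull : ∀ (f : A) (X Y : E), D (f • X) Y = f • D X Y)
    (D_addr : ∀ X Y Y' : E, D X (Y + Y') = D X Y + D X Y')
    (D_leib : ∀ (f : A) (X Y : E), D X (f • Y) = ρ X f • Y + f • D X Y)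
    (T : E → E → E) (hT : ∀ X Y : E, T X Y = D X Y - D Y X - br X Y)
    (R : E → E → E → E)
    (hR : ∀ X Y Z : E, R X Y Z = D X (D Y Z) - D Y (D X Z) - D (br X Y) Z)
    (X Y Z : E) :
    R X Y Z + R Y Z X + R Z X Y =
      ((D X (T Y Z) - T (D X Y) Z - T Y (D X Z))
        + (D Y (T Z X) - T (D Y Z) X - T Z (D Y X))
        + (D Z (T X Y) - T (D Z X) Y - T X (D Z Y)))
      + (T (T X Y) Z + T (T Y Z) X + T (T Z X) Y)
      + (br X (br Y Z) + br Y (br Z X) + br Z (br X Y)) :=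
  statement0_general br br_addl br_addr br_skew D D_addl D_addr T hT R hR X Y Z
end

section
/- The bracket [·,·]_{E₀} on sections of E₀ is anchor-compatible: for all sections X, Y of E₀ one has ρ([X,Y]_{E₀}) = [ρ(X), ρ(Y)], where the right-hand side is the Lie bracket of vector fields on ℝ². In other words, (E₀, ρ, [·,·]_{E₀}) is an almost Lie algebroid. -/
noncomputable section

set_option maxHeartbeats 1000000
set_option synthInstance.maxHeartbeats 400000

open Matrix

/-- The ℝ-algebra of smooth (C^∞) functions on ℝ². -/
def Sm : Subalgebra ℝ ((ℝ × ℝ) → ℝ) where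
  carrier := {f | ContDiff ℝ (⊤ : ℕ∞) f}
  mul_mem' := fun {a b} (hf : ContDiff ℝ (⊤ : ℕ∞) a) (hg : ContDiff ℝ (⊤ : ℕ∞) b) => hf.mul hg
  add_mem' := fun {a b} (hf : ContDiff ℝ (⊤ : ℕ∞) a) (hg : ContDiff ℝ (⊤ : ℕ∞) b) => hf.add hg
  algebraMap_mem' r :=
    show ContDiff ℝ (⊤ : ℕ∞) (algebraMap ℝ ((ℝ × ℝ) → ℝ) r) from contDiff_const

/-- Smooth functions on the plane. -/
abbrev S : Type := Sm

lemma mem_Sm_iff {f : (ℝ × ℝ) → ℝ} : f ∈ Sm ↔ ContDiff ℝ (⊤ : ℕ∞) f := by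
  rw [Sm]; rfl

lemma smooth_coe (f : S) : ContDiff ℝ (⊤ : ℕ∞) (f : (ℝ × ℝ) → ℝ) := mem_Sm_iff.mp f.2

/-- Sections of the trivial bundle `ℝ² × M₂(ℝ)`, as 2×2 matrices of smooth functions. -/
abbrev E₀ : Type := Matrix (Fin 2) (Fin 2) S

/-- The section `X_j^i`: the constant elementary matrix with 1 in entry (i,j). -/
def sb (i j : Fin 2) : E₀ := Matrix.single i j 1

/-- First coordinate function. -/
def x₁ : S := ⟨fun p => p.1, mem_Sm_iff.mpr contDiff_fst⟩
/-- Second coordinate function. -/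
def x₂ : S := ⟨fun p => p.2, mem_Sm_iff.mpr contDiff_snd⟩
/-- Coordinates. -/
def xc : Fin 2 → S := ![x₁, x₂]

/-- Directional derivative of a smooth function, in direction `v`. -/
def pdAux (v : ℝ × ℝ) (f : S) : S :=
  ⟨fun p => fderiv ℝ (f : (ℝ × ℝ) → ℝ) p v,
    mem_Sm_iff.mpr (((smooth_coe f).fderiv_right (le_refl _)).clm_apply contDiff_const)⟩

/-- The vector field (derivation) `∂/∂v` on `ℝ²`. -/
def pd (v : ℝ × ℝ) : Derivation ℝ S S where
  toFun := pdAux v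
  map_add' f g := by
    ext p
    have hf : DifferentiableAt ℝ (f : (ℝ × ℝ) → ℝ) p :=
      ((smooth_coe f).differentiable (by simp)).differentiableAt
    have hg : DifferentiableAt ℝ (g : (ℝ × ℝ) → ℝ) p :=
      ((smooth_coe g).differentiable (by simp)).differentiableAt
    have h1 : ((f + g : S) : (ℝ × ℝ) → ℝ) = fun q => (f : (ℝ × ℝ) → ℝ) q + (g : (ℝ × ℝ) → ℝ) q := rfl
    simp only [pdAux, h1, AddMemClass.coe_add, Pi.add_apply]
    rw [show (fun q => (f : (ℝ × ℝ) → ℝ) q + (g : (ℝ × ℝ) → ℝ) q) = (f : (ℝ × ℝ) → ℝ) + g from rfl,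
      fderiv_add hf hg]
    simp
  map_smul' c f := by
    ext p
    have h1 : ((c • f : S) : (ℝ × ℝ) → ℝ) = fun q => c * (f : (ℝ × ℝ) → ℝ) q := rfl
    have hf : DifferentiableAt ℝ (f : (ℝ × ℝ) → ℝ) p :=
      ((smooth_coe f).differentiable (by simp)).differentiableAt
    simp only [pdAux]
    rw [h1, fderiv_const_mul hf]
    simp
  map_one_eq_zero' := by
    ext p
    have h1 : ((1 : S) : (ℝ × ℝ) → ℝ) = fun _ => (1 : ℝ) := rfl
    have h2 : fderiv ℝ (1 : (ℝ × ℝ) → ℝ) p = 0 := fderiv_const_apply 1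
    simp [pdAux, h1, h2]
  leibniz' f g := by
    ext p
    have hf : DifferentiableAt ℝ (f : (ℝ × ℝ) → ℝ) p :=
      ((smooth_coe f).differentiable (by simp)).differentiableAt
    have hg : DifferentiableAt ℝ (g : (ℝ × ℝ) → ℝ) p :=
      ((smooth_coe g).differentiable (by simp)).differentiableAt
    have h1 : ((f * g : S) : (ℝ × ℝ) → ℝ) = fun q => (f : (ℝ × ℝ) → ℝ) q * (g : (ℝ × ℝ) → ℝ) q := rfl
    simp [pdAux, h1, fderiv_mul hf hg]
    rw [show (fun q => (f : (ℝ × ℝ) → ℝ) q * (g : (ℝ × ℝ) → ℝ) q) = (f : (ℝ × ℝ) → ℝ) * g from rfl,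
      fderiv_mul hf hg]
    simp
    try ring

/-- Standard basis vectors of ℝ². -/
def ev : Fin 2 → ℝ × ℝ := ![(1, 0), (0, 1)]

/-- The anchor `ρ` of `E₀`: `ρ(X_j^i) = (x^i)² ∂/∂x^j`, extended `C^∞(ℝ²)`-linearly. -/
def anchor (X : E₀) : Derivation ℝ S S :=
  ∑ i : Fin 2, ∑ j : Fin 2, (X i j * xc i ^ 2) • pd (ev j)

/-- The section `𝒳₁ = (x²)² X₁¹ − (x¹)² X₁²`. -/
def 𝓧₁ : E₀ := x₂ ^ 2 • sb 0 0 - x₁ ^ 2 • sb 1 0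
/-- The section `𝒳₂ = (x²)² X₂¹ − (x¹)² X₂²`. -/
def 𝓧₂ : E₀ := x₂ ^ 2 • sb 0 1 - x₁ ^ 2 • sb 1 1

/-- The almost Lie bracket axioms for `(E₀, ρ)`, together with the defining values
`[X_j^i, X_l^k] = 2x^k δ_j^k X_l^i − 2x^i δ_l^i X_j^k` on the generators: ℝ-bilinearity,
skew-symmetry, the Leibniz rule, and the values on generators. -/
def IsBracket (L : E₀ → E₀ → E₀) : Prop :=
  (∀ X X' Y, L (X + X') Y = L X Y + L X' Y) ∧
  (∀ X Y Y', L X (Y + Y') = L X Y + L X Y') ∧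
  (∀ (c : ℝ) (X Y : E₀), L (c • X) Y = c • L X Y) ∧
  (∀ (c : ℝ) (X Y : E₀), L X (c • Y) = c • L X Y) ∧
  (∀ X Y, L Y X = - L X Y) ∧
  (∀ (f : S) (X Y : E₀), L X (f • Y) = anchor X f • Y + f • L X Y) ∧
  (∀ i j k l, L (sb i j) (sb k l) =
    (if j = k then (2 : S) * xc k else 0) • sb i l
      - (if l = i then (2 : S) * xc i else 0) • sb k j)

/-!
The defect `ρ [X, Y] - ⁅ρ X, ρ Y⁆` is additive in `Y`, and `C^∞`-linear in `Y` because the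
Leibniz rule of the bracket and the identity `⁅D, f • E⁆ = D f • E + f • ⁅D, E⁆` for vector fields
produce the same term `ρ X f • ρ Y`. By skew-symmetry the same holds in `X`, so the defect vanishes
once it vanishes on the generators `X_j^i`. There the coordinate vector fields commute (Schwarz),
and `∂_j (x^k)² = 2 δ_j^k x^k` gives exactly the prescribed values `[X_j^i, X_l^k]`.
-/

namespace Derivation

variable {R A : Type*} [CommRing R] [CommRing A] [Algebra R A]

theorem lie_smul_right (D E : Derivation R A A) (f : A) :
    ⁅D, f • E⁆ = D f • E + f • ⁅D, E⁆ := by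
  ext g
  simp only [commutator_apply, smul_apply, add_apply, leibniz, smul_eq_mul]
  ring

theorem lie_smul_smul_of_lie_eq_zero {D E : Derivation R A A} (hDE : ⁅D, E⁆ = 0) (f g : A) :
    ⁅f • D, g • E⁆ = (f * D g) • E - (g * E f) • D := by
  ext h
  have hcomm : D (E h) = E (D h) := by
    simpa [commutator_apply, sub_eq_zero] using DFunLike.congr_fun hDE h
  simp only [commutator_apply, smul_apply, sub_apply, leibniz, smul_eq_mul, hcomm]
  ring

end Derivation

section AnchorCompatibility

variable {R A M : Type*} [CommRing R] [CommRing A] [Algebra R A] [AddCommGroup M] [Module A M]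
  (ρ : M →ₗ[A] Derivation R A A) (L : M → M → M)

def anchorCompatibleSubmodule (hadd : ∀ X Y Y', L X (Y + Y') = L X Y + L X Y')
    (hleib : ∀ (f : A) X Y, L X (f • Y) = ρ X f • Y + f • L X Y) (X : M) : Submodule A M where
  carrier := {Y | ρ (L X Y) = ⁅ρ X, ρ Y⁆}
  zero_mem' := by
    have h0 : L X 0 = 0 := by simpa using hadd X 0 0
    simp [h0]
  add_mem' {Y Y'} (hY : ρ (L X Y) = _) (hY' : ρ (L X Y') = _) := by
    simp only [Set.mem_ofPred_eq, hadd, map_add, hY, hY', lie_add]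
  smul_mem' f Y (hY : ρ (L X Y) = _) := by
    simp only [Set.mem_ofPred_eq, hleib, map_add, map_smul, hY, Derivation.lie_smul_right]

theorem anchor_lie_eq_of_span_eq_top {s : Set M} (hs : Submodule.span A s = ⊤)
    (hadd : ∀ X Y Y', L X (Y + Y') = L X Y + L X Y') (hskew : ∀ X Y, L Y X = -L X Y)
    (hleib : ∀ (f : A) X Y, L X (f • Y) = ρ X f • Y + f • L X Y)
    (hgen : ∀ x ∈ s, ∀ y ∈ s, ρ (L x y) = ⁅ρ x, ρ y⁆) (X Y : M) :
    ρ (L X Y) = ⁅ρ X, ρ Y⁆ := by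
  have hsymm : ∀ X Y, ρ (L X Y) = ⁅ρ X, ρ Y⁆ → ρ (L Y X) = ⁅ρ Y, ρ X⁆ := by
    intro X Y h
    rw [hskew, map_neg, h, lie_skew]
  have hcompat : ∀ X, s ⊆ anchorCompatibleSubmodule ρ L hadd hleib X → ∀ Y,
      ρ (L X Y) = ⁅ρ X, ρ Y⁆ := fun X hX Y =>
    (Submodule.span_le.mpr hX) (hs ▸ Submodule.mem_top : Y ∈ Submodule.span A s)
  have hgen_left : ∀ x ∈ s, ∀ Y, ρ (L x Y) = ⁅ρ x, ρ Y⁆ := fun x hx =>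
    hcompat x fun y hy => hgen x hx y hy
  exact hsymm Y X (hcompat Y (fun x hx => hsymm x Y (hgen_left x hx Y)) X)

end AnchorCompatibility

def anchorₗ : E₀ →ₗ[S] Derivation ℝ S S where
  toFun := anchor
  map_add' X Y := by
    simp only [anchor, Matrix.add_apply, add_mul, add_smul, Finset.sum_add_distrib]
  map_smul' f X := by
    simp only [anchor, Matrix.smul_apply, smul_eq_mul, mul_assoc, mul_smul, Finset.smul_sum,
      RingHom.id_apply]

theorem anchorₗ_sb (i j : Fin 2) : anchorₗ (sb i j) = xc i ^ 2 • pd (ev j) := by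
  change anchor (sb i j) = _
  fin_cases i <;> fin_cases j <;> simp [anchor, sb, Fin.sum_univ_two, Matrix.single_apply]

theorem pd_xc (j k : Fin 2) : pd (ev j) (xc k) = if j = k then 1 else 0 := by
  fin_cases j <;> fin_cases k <;> ext p <;>
    simp [pd, pdAux, xc, x₁, x₂, ev, fderiv_fst, fderiv_snd]

theorem pd_xc_sq (j k : Fin 2) : pd (ev j) (xc k ^ 2) = if j = k then 2 * xc k else 0 := by
  rw [Derivation.leibniz_pow, pd_xc]
  split_ifs <;> simp [two_mul]

theorem pd_pd_comm (u v : ℝ × ℝ) (f : S) : pd u (pd v f) = pd v (pd u f) := by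
  ext p
  have hf := smooth_coe f
  have hf' : ContDiff ℝ (⊤ : ℕ∞) (fderiv ℝ (f : ℝ × ℝ → ℝ)) := hf.fderiv_right le_rfl
  have hdf : DifferentiableAt ℝ (fderiv ℝ (f : ℝ × ℝ → ℝ)) p :=
    (hf'.differentiable (by simp)).differentiableAt
  have hsymm : IsSymmSndFDerivAt ℝ (f : ℝ × ℝ → ℝ) p :=
    hf.contDiffAt.isSymmSndFDerivAt <| by
      simpa using WithTop.coe_le_coe.mpr (le_top : (2 : ℕ∞) ≤ ⊤)
  show fderiv ℝ (fun q => fderiv ℝ (f : ℝ × ℝ → ℝ) q v) p u =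
    fderiv ℝ (fun q => fderiv ℝ (f : ℝ × ℝ → ℝ) q u) p v
  rw [fderiv_clm_apply hdf (differentiableAt_const v),
    fderiv_clm_apply hdf (differentiableAt_const u)]
  simpa using hsymm u v

theorem lie_pd_pd (u v : ℝ × ℝ) : ⁅pd u, pd v⁆ = 0 := by
  ext f
  rw [Derivation.commutator_apply, pd_pd_comm, sub_self, Derivation.zero_apply]

theorem anchorₗ_lie_sb (i j k l : Fin 2) :
    anchorₗ ((if j = k then (2 : S) * xc k else 0) • sb i l
      - (if l = i then (2 : S) * xc i else 0) • sb k j)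
    = ⁅anchorₗ (sb i j), anchorₗ (sb k l)⁆ := by
  rw [map_sub, map_smul, map_smul, anchorₗ_sb, anchorₗ_sb, anchorₗ_sb, anchorₗ_sb,
    Derivation.lie_smul_smul_of_lie_eq_zero (lie_pd_pd _ _), pd_xc_sq, pd_xc_sq]
  split_ifs <;> module

theorem span_range_sb :
    Submodule.span S (Set.range fun ij : Fin 2 × Fin 2 => sb ij.1 ij.2) = ⊤ := by
  have hsb : ⇑(Matrix.stdBasis S (Fin 2) (Fin 2)) = fun ij => sb ij.1 ij.2 :=
    funext fun ij => Matrix.stdBasis_eq_single S ij.1 ij.2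
  rw [← hsb, Module.Basis.span_eq]

/-- the bracket `[·,·]_{E₀}` is anchor-compatible:
`ρ([X,Y]_{E₀}) = [ρ(X), ρ(Y)]` (Lie bracket of vector fields), i.e.
`(E₀, ρ, [·,·]_{E₀})` is an almost Lie algebroid. -/
theorem statement2 (L : E₀ → E₀ → E₀) (hL : IsBracket L) :
    ∀ X Y : E₀, anchor (L X Y) = ⁅anchor X, anchor Y⁆ := by
  obtain ⟨-, hadd, -, -, hskew, hleib, hgen⟩ := hL
  refine anchor_lie_eq_of_span_eq_top anchorₗ L span_range_sb hadd hskew hleib ?_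
  rintro _ ⟨⟨i, j⟩, rfl⟩ _ ⟨⟨k, l⟩, rfl⟩
  rw [hgen]
  exact anchorₗ_lie_sb i j k l
end
end

section
/- There is no E₀-connection ∇ on E₀ (with respect to the anchor ρ and the bracket [·,·]_{E₀}) whose torsion T(X,Y) = ∇_X Y − ∇_Y X − [X,Y]_{E₀} and curvature R(X,Y)Z = ∇_X ∇_Y Z − ∇_Y ∇_X Z − ∇_{[X,Y]_{E₀}} Z both vanish identically on all sections X, Y, Z of E₀. -/
/-! Vanishing torsion writes the bracket as `∇_X Y - ∇_Y X`, and vanishing curvature then forces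
the Jacobi identity for `[·,·]_{E₀}`. But the bracket is not a Lie bracket: the Leibniz rule lets
the anchor act on the coefficients `2xᵏ` of the structure constants, and the Jacobiator of
`X₁¹, X₂¹, X₁²` comes out as `-2𝒳₂`, whose `(2,2)` entry `2(x¹)²` does not vanish at `(1,0)`. -/

noncomputable section

set_option maxHeartbeats 1000000
set_option synthInstance.maxHeartbeats 400000

open Matrix

/-- The Koszul axioms for an `E₀`-connection on `E₀` (with respect to the anchor `ρ`):
`C^∞(ℝ²)`-linearity in the first argument, additivity in the second argument, and the
Leibniz rule. -/
def IsConn (D : E₀ → E₀ → E₀) : Prop :=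
  (∀ X X' Y, D (X + X') Y = D X Y + D X' Y) ∧
  (∀ (f : S) (X Y : E₀), D (f • X) Y = f • D X Y) ∧
  (∀ X Y Y', D X (Y + Y') = D X Y + D X Y') ∧
  (∀ (f : S) (X Y : E₀), D X (f • Y) = anchor X f • Y + f • D X Y)


section Jacobi

variable {M : Type*} [AddCommGroup M]

theorem jacobi_of_torsion_eq_zero_of_curvature_eq_zero (D L : M → M → M)
    (hD : ∀ X Y Y', D X (Y + Y') = D X Y + D X Y')
    (hT : ∀ X Y, D X Y - D Y X - L X Y = 0)
    (hR : ∀ X Y Z, D X (D Y Z) - D Y (D X Z) - D (L X Y) Z = 0) (X Y Z : M) :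
    L (L X Y) Z + L (L Y Z) X + L (L Z X) Y = 0 := by
  have hLD : ∀ X Y, L X Y = D X Y - D Y X := fun X Y => (sub_eq_zero.mp (hT X Y)).symm
  have hDL : ∀ X Y Z, D (L X Y) Z = D X (D Y Z) - D Y (D X Z) :=
    fun X Y Z => (sub_eq_zero.mp (hR X Y Z)).symm
  have hD_sub : ∀ X Y Y', D X (Y - Y') = D X Y - D X Y' :=
    fun X => (AddMonoidHom.mk' (D X) (hD X)).map_sub
  rw [hLD (L X Y), hLD (L Y Z), hLD (L Z X), hDL, hDL, hDL, hLD X Y, hLD Y Z, hLD Z X,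
    hD_sub, hD_sub, hD_sub]
  abel

end Jacobi

lemma pd_ev_xc (j m : Fin 2) : pd (ev j) (xc m) = if m = j then 1 else 0 := by
  ext p
  fin_cases m
  · change fderiv ℝ Prod.fst p (ev j) = ((if (0 : Fin 2) = j then 1 else 0 : S) : ℝ × ℝ → ℝ) p
    rw [hasFDerivAt_fst.fderiv]
    fin_cases j <;> simp [ev]
  · change fderiv ℝ Prod.snd p (ev j) = ((if (1 : Fin 2) = j then 1 else 0 : S) : ℝ × ℝ → ℝ) p
    rw [hasFDerivAt_snd.fderiv]
    fin_cases j <;> simp [ev]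

lemma anchor_sb (a b : Fin 2) : anchor (sb a b) = xc a ^ 2 • pd (ev b) := by
  fin_cases a <;> fin_cases b <;> simp [anchor, sb, Matrix.single_apply]

lemma anchor_sb_two_mul_xc (a b m : Fin 2) :
    anchor (sb a b) (2 * xc m) = if m = b then 2 * xc a ^ 2 else 0 := by
  have h2 : pd (ev b) (2 : S) = 0 := by simpa using (pd (ev b)).map_natCast 2
  rw [anchor_sb, Derivation.smul_apply, Derivation.leibniz, pd_ev_xc, h2]
  split_ifs <;> simp [mul_comm]

section Bracket

variable {L : E₀ → E₀ → E₀}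

lemma IsBracket.sub_left (hL : IsBracket L) (X X' Y : E₀) : L (X - X') Y = L X Y - L X' Y :=
  (AddMonoidHom.mk' (L · Y) fun X X' => hL.1 X X' Y).map_sub X X'

lemma IsBracket.smul_left (hL : IsBracket L) (f : S) (X Y : E₀) :
    L (f • X) Y = f • L X Y - anchor Y f • X := by
  rw [hL.2.2.2.2.1 Y, hL.2.2.2.2.2.1, hL.2.2.2.2.1 X Y, smul_neg, neg_add, neg_neg]
  abel

lemma IsBracket.sb_sb (hL : IsBracket L) (i j k l : Fin 2) : L (sb i j) (sb k l) =
    (if j = k then (2 : S) * xc k else 0) • sb i l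
      - (if l = i then (2 : S) * xc i else 0) • sb k j :=
  hL.2.2.2.2.2.2 i j k l

lemma IsBracket.jacobiator_sb (hL : IsBracket L) :
    L (L (sb 0 0) (sb 0 1)) (sb 1 0) + L (L (sb 0 1) (sb 1 0)) (sb 0 0)
      + L (L (sb 1 0) (sb 0 0)) (sb 0 1) = -((2 : S) • 𝓧₂) := by
  simp +decide only [hL.sb_sb, ↓reduceIte, hL.sub_left, hL.smul_left, anchor_sb_two_mul_xc,
    map_zero]
  change _ = -((2 : S) • (xc 1 ^ 2 • sb 0 1 - xc 0 ^ 2 • sb 1 1))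
  module

end Bracket

lemma two_smul_𝓧₂_ne_zero : (2 : S) • 𝓧₂ ≠ 0 := by
  have h11 : (((2 : S) • 𝓧₂) 1 1 : ℝ × ℝ → ℝ) (1, 0) = -2 := by
    simp [𝓧₂, sb, x₁, show ((2 : S) : ℝ × ℝ → ℝ) = 2 from rfl]
  intro h
  rw [h] at h11
  norm_num at h11

/-- there is no `E₀`-connection on `E₀` whose torsion and curvature
(with respect to `[·,·]_{E₀}`) both vanish identically. -/
theorem statement6 (L : E₀ → E₀ → E₀) (hL : IsBracket L) :
    ¬ ∃ D : E₀ → E₀ → E₀, IsConn D ∧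
      (∀ X Y : E₀, D X Y - D Y X - L X Y = 0) ∧
      (∀ X Y Z : E₀, D X (D Y Z) - D Y (D X Z) - D (L X Y) Z = 0) := by
  rintro ⟨D, hD, hT, hR⟩
  have hJ := jacobi_of_torsion_eq_zero_of_curvature_eq_zero D L hD.2.2.1 hT hR
    (sb 0 0) (sb 0 1) (sb 1 0)
  rw [hL.jacobiator_sb, neg_eq_zero] at hJ
  exact two_smul_𝓧₂_ne_zero hJ
end
end

section
/- Let (E, ρ, [·,·]) be an almost Lie algebroid (i.e., ρ([X,Y]) = [ρ(X), ρ(Y)] for all X, Y) and ∇ a torsion-free E-connection on E with curvature R. Then the derived bracket [U,V]_{E^(1)} = ∇^(1)_U V − ∇^(1)_V U on E^(1) = E ⊕ Λ²_A E satisfies the anchor compatibility ρ^(1)([U,V]_{E^(1)}) = [ρ^(1)(U), ρ^(1)(V)] for all U, V ∈ E^(1) if and only if ρ(R(X,Y)Z) = 0 for all X, Y, Z ∈ E. -/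
/-!
The anchor `ρ¹` of the derived module vanishes on `Λ²_A E` exactly because `E` is almost Lie,
so `ρ¹ = ρ ∘ fst` and only the `E`-component of `[U,V]_{E⁽¹⁾}` matters. Anchor compatibility is
biadditive in `(U, V)`, and `E ⊕ Λ²_A E` is additively generated by the elements `X` and `X ∧ Y`,
so it suffices to check it on pairs of generators. For `X, Y` torsion-freeness gives
`[X,Y]_{E⁽¹⁾} = ([X,Y], X ∧ Y)`; for `X ∧ Y, Z` the `E`-component is `R(X,Y)Z` while
`[ρ¹(X ∧ Y), ρ Z] = 0`; for two wedges the `E`-component is `0`.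
-/
noncomputable section

/-- The wedge `X ∧ Y ∈ Λ²_A E` of two elements of `E`. -/
def wedgeA (A : Type*) [CommRing A] {E : Type*} [AddCommGroup E] [Module A E] (X Y : E) :
    ⋀[A]^2 E :=
  ⟨ExteriorAlgebra.ιMulti A 2 ![X, Y], ExteriorAlgebra.ιMulti_range A 2 (Set.mem_range_self _)⟩

section Wedge

variable {A : Type*} [CommRing A] {E : Type*} [AddCommGroup E] [Module A E]

theorem smul_ιMulti_two (r : A) (v : Fin 2 → E) :
    r • exteriorPower.ιMulti A 2 v = wedgeA A (r • v 0) (v 1) := by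
  rw [← Function.update_eq_self 0 v, ← AlternatingMap.map_update_smul]
  congr 1

@[elab_as_elim]
theorem exteriorPower_two_induction {p : ⋀[A]^2 E → Prop} (zero : p 0)
    (add : ∀ w w', p w → p w' → p (w + w')) (wedge : ∀ X Y, p (wedgeA A X Y)) (w : ⋀[A]^2 E) :
    p w := by
  have hw : w ∈ Submodule.span A (Set.range (exteriorPower.ιMulti A 2)) := by
    rw [exteriorPower.ιMulti_span]; trivial
  induction hw using Submodule.closure_induction with
  | zero => exact zero
  | add _ _ _ _ h h' => exact add _ _ h h'
  | smul_mem r _ hv =>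
    obtain ⟨v, rfl⟩ := hv
    rw [smul_ιMulti_two]
    exact wedge _ _

@[elab_as_elim]
theorem prod_exteriorPower_two_induction {p : E × ⋀[A]^2 E → Prop}
    (inl : ∀ X, p (X, 0)) (wedge : ∀ X Y, p (0, wedgeA A X Y))
    (add : ∀ U U', p U → p U' → p (U + U')) (U : E × ⋀[A]^2 E) : p U := by
  obtain ⟨X, w⟩ := U
  rw [← add_zero X, ← zero_add w, ← Prod.mk_add_mk]
  refine add _ _ (inl X) ?_
  induction w using exteriorPower_two_induction with
  | zero => exact inl 0
  | add w w' h h' => simpa using add _ _ h h'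
  | wedge X Y => exact wedge X Y

theorem apply_eq_apply_fst_of_wedgeA_eq_zero {N : Type*} [AddCommGroup N]
    (f : E × ⋀[A]^2 E → N) (g : E → N) (hf : ∀ U V, f (U + V) = f U + f V)
    (hinl : ∀ X, f (X, 0) = g X) (hwedge : ∀ X Y, f (0, wedgeA A X Y) = 0) (U : E × ⋀[A]^2 E) :
    f U = g U.1 := by
  obtain ⟨X, w⟩ := U
  have hinr : f (0, w) = 0 := by
    induction w using exteriorPower_two_induction with
    | zero => exact (by simpa using hf 0 0 : f 0 = 0)
    | add w w' h h' => simpa [h, h'] using hf (0, w) (0, w')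
    | wedge X Y => exact hwedge X Y
  simpa [hinl, hinr] using hf (X, 0) (0, w)

theorem prod_exteriorPower_two_induction₂ {p : E × ⋀[A]^2 E → E × ⋀[A]^2 E → Prop}
    (add_left : ∀ U U' V, p U V → p U' V → p (U + U') V)
    (add_right : ∀ U V V', p U V → p U V' → p U (V + V'))
    (inl_inl : ∀ X Y, p (X, 0) (Y, 0))
    (wedge_inl : ∀ X Y Z, p (0, wedgeA A X Y) (Z, 0))
    (inl_wedge : ∀ X Y Z, p (X, 0) (0, wedgeA A Y Z))
    (wedge_wedge : ∀ X Y Z T, p (0, wedgeA A X Y) (0, wedgeA A Z T))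
    (U V : E × ⋀[A]^2 E) : p U V := by
  induction U using prod_exteriorPower_two_induction with
  | inl X =>
    induction V using prod_exteriorPower_two_induction with
    | inl Y => exact inl_inl X Y
    | wedge Y Z => exact inl_wedge X Y Z
    | add V V' h h' => exact add_right _ _ _ h h'
  | wedge X Y =>
    induction V using prod_exteriorPower_two_induction with
    | inl Z => exact wedge_inl X Y Z
    | wedge Z T => exact wedge_wedge X Y Z T
    | add V V' h h' => exact add_right _ _ _ h h'
  | add U U' h h' => exact add_left _ _ _ h h'

end Wedge

section AnchorCompatible

variable {M L : Type*} [AddCommGroup M] [LieRing L] {a : M →+ L} {Dd : M → M → M}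

def AnchorCompatible (a : M →+ L) (Dd : M → M → M) (U V : M) : Prop :=
  a (Dd U V - Dd V U) = ⁅a U, a V⁆

theorem AnchorCompatible.symm {U V : M} (h : AnchorCompatible a Dd U V) :
    AnchorCompatible a Dd V U := by
  unfold AnchorCompatible at *
  rw [← neg_sub, map_neg, h, lie_skew]

theorem AnchorCompatible.add_right (hl : ∀ U U' V, Dd (U + U') V = Dd U V + Dd U' V)
    (hr : ∀ U V V', Dd U (V + V') = Dd U V + Dd U V') {U V V' : M}
    (h : AnchorCompatible a Dd U V) (h' : AnchorCompatible a Dd U V') :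
    AnchorCompatible a Dd U (V + V') := by
  unfold AnchorCompatible at *
  rw [hl, hr, add_sub_add_comm, map_add, h, h', map_add, lie_add]

theorem AnchorCompatible.add_left (hl : ∀ U U' V, Dd (U + U') V = Dd U V + Dd U' V)
    (hr : ∀ U V V', Dd U (V + V') = Dd U V + Dd U V') {U U' V : M}
    (h : AnchorCompatible a Dd U V) (h' : AnchorCompatible a Dd U' V) :
    AnchorCompatible a Dd (U + U') V :=
  (h.symm.add_right hl hr h'.symm).symm

end AnchorCompatible

theorem statement10_general
    {A : Type*} [CommRing A] [Algebra ℝ A]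
    {E : Type*} [AddCommGroup E] [Module A E]
    (ρ : E →ₗ[A] Derivation ℝ A A) (br : E → E → E)
    (br_anchor : ∀ X Y : E, ρ (br X Y) = ⁅ρ X, ρ Y⁆)
    (D : E → E → E)
    (D_torsionfree : ∀ X Y : E, D X Y - D Y X = br X Y)
    (R : E → E → E → E)
    (ρd : E × ⋀[A]^2 E → Derivation ℝ A A)
    (hρdadd : ∀ U V : E × ⋀[A]^2 E, ρd (U + V) = ρd U + ρd V)
    (hρdE : ∀ X : E, ρd (X, 0) = ρ X)
    (hρdW : ∀ X Y : E, ρd (0, wedgeA A X Y) = ⁅ρ X, ρ Y⁆ - ρ (br X Y))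
    (Dd : E × ⋀[A]^2 E → E × ⋀[A]^2 E → E × ⋀[A]^2 E)
    (hDdaddl : ∀ U U' V : E × ⋀[A]^2 E, Dd (U + U') V = Dd U V + Dd U' V)
    (hDdaddr : ∀ U V V' : E × ⋀[A]^2 E, Dd U (V + V') = Dd U V + Dd U V')
    (hDd1 : ∀ X Y : E, Dd (X, 0) (Y, 0) = (D X Y, algebraMap ℝ A (1 / 2) • wedgeA A X Y))
    (hDd2 : ∀ X Y Z : E, Dd (0, wedgeA A X Y) (Z, 0) = (R X Y Z, 0))
    (hDd3 : ∀ X Y Z : E, Dd (X, 0) (0, wedgeA A Y Z) =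
      (0, wedgeA A (D X Y) Z + wedgeA A Y (D X Z)))
    (hDd4 : ∀ X Y Z T : E, Dd (0, wedgeA A X Y) (0, wedgeA A Z T) =
      (0, wedgeA A (R X Y Z) T + wedgeA A Z (R X Y T))) :
    (∀ U V : E × ⋀[A]^2 E, ρd (Dd U V - Dd V U) = ⁅ρd U, ρd V⁆) ↔
      (∀ X Y Z : E, ρ (R X Y Z) = 0) := by
  have hρd : ∀ U, ρd U = ρ U.1 := apply_eq_apply_fst_of_wedgeA_eq_zero ρd ρ hρdadd hρdE
    fun X Y => by rw [hρdW, br_anchor, sub_self]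
  change (∀ U V, AnchorCompatible (AddMonoidHom.mk' ρd hρdadd) Dd U V) ↔ _
  refine ⟨fun h X Y Z => ?_, fun hRρ => ?_⟩
  · simpa [AnchorCompatible, hρd, hDd2, hDd3] using h (0, wedgeA A X Y) (Z, 0)
  refine prod_exteriorPower_two_induction₂ (fun _ _ _ => AnchorCompatible.add_left hDdaddl hDdaddr)
    (fun _ _ _ => AnchorCompatible.add_right hDdaddl hDdaddr) ?_ ?_ ?_ ?_
  · intro X Y
    simp [AnchorCompatible, hρd, hDd1, D_torsionfree, br_anchor]
  · intro X Y Z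
    simp [AnchorCompatible, hρd, hDd2, hDd3, hRρ]
  · intro X Y Z
    simp [AnchorCompatible, hρd, hDd2, hDd3, hRρ]
  · intro X Y Z T
    simp [AnchorCompatible, hρd, hDd4]

/-- Let `(E, ρ, br)` be an almost Lie algebroid over a commutative
ℝ-algebra `A` and `D` a torsion-free `E`-connection on `E` with curvature `R`.  The derived
bracket `[U,V] = ∇¹_U V − ∇¹_V U` on `E⁽¹⁾ = E ⊕ Λ²_A E` (with anchor `ρ¹` and lifted
connection `∇¹` determined by the formulas below) satisfies anchor compatibility for all
`U, V ∈ E⁽¹⁾` if and only if `ρ(R(X,Y)Z) = 0` for all `X, Y, Z ∈ E`. -/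
theorem statement10
    {A : Type*} [CommRing A] [Algebra ℝ A]
    {E : Type*} [AddCommGroup E] [Module A E] [Module ℝ E] [IsScalarTower ℝ A E]
    (ρ : E →ₗ[A] Derivation ℝ A A) (br : E → E → E)
    (br_addl : ∀ X X' Y : E, br (X + X') Y = br X Y + br X' Y)
    (br_addr : ∀ X Y Y' : E, br X (Y + Y') = br X Y + br X Y')
    (br_smull : ∀ (c : ℝ) (X Y : E), br (c • X) Y = c • br X Y)
    (br_smulr : ∀ (c : ℝ) (X Y : E), br X (c • Y) = c • br X Y)
    (br_skew : ∀ X Y : E, br Y X = - br X Y)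
    (br_leib : ∀ (f : A) (X Y : E), br X (f • Y) = ρ X f • Y + f • br X Y)
    (br_anchor : ∀ X Y : E, ρ (br X Y) = ⁅ρ X, ρ Y⁆)
    (D : E → E → E)
    (D_addl : ∀ X X' Y : E, D (X + X') Y = D X Y + D X' Y)
    (D_smull : ∀ (f : A) (X Y : E), D (f • X) Y = f • D X Y)
    (D_addr : ∀ X Y Y' : E, D X (Y + Y') = D X Y + D X Y')
    (D_leib : ∀ (f : A) (X Y : E), D X (f • Y) = ρ X f • Y + f • D X Y)
    (D_torsionfree : ∀ X Y : E, D X Y - D Y X = br X Y)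
    (R : E → E → E → E)
    (hR : ∀ X Y Z : E, R X Y Z = D X (D Y Z) - D Y (D X Z) - D (br X Y) Z)
    (ρd : E × ⋀[A]^2 E → Derivation ℝ A A)
    (hρdadd : ∀ U V : E × ⋀[A]^2 E, ρd (U + V) = ρd U + ρd V)
    (hρdE : ∀ X : E, ρd (X, 0) = ρ X)
    (hρdW : ∀ X Y : E, ρd (0, wedgeA A X Y) = ⁅ρ X, ρ Y⁆ - ρ (br X Y))
    (Dd : E × ⋀[A]^2 E → E × ⋀[A]^2 E → E × ⋀[A]^2 E)
    (hDdaddl : ∀ U U' V : E × ⋀[A]^2 E, Dd (U + U') V = Dd U V + Dd U' V)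
    (hDdaddr : ∀ U V V' : E × ⋀[A]^2 E, Dd U (V + V') = Dd U V + Dd U V')
    (hDdsmull : ∀ (f : A) (U V : E × ⋀[A]^2 E), Dd (f • U) V = f • Dd U V)
    (hDdleib : ∀ (f : A) (U V : E × ⋀[A]^2 E), Dd U (f • V) = ρd U f • V + f • Dd U V)
    (hDd1 : ∀ X Y : E, Dd (X, 0) (Y, 0) = (D X Y, algebraMap ℝ A (1 / 2) • wedgeA A X Y))
    (hDd2 : ∀ X Y Z : E, Dd (0, wedgeA A X Y) (Z, 0) = (R X Y Z, 0))
    (hDd3 : ∀ X Y Z : E, Dd (X, 0) (0, wedgeA A Y Z) =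
      (0, wedgeA A (D X Y) Z + wedgeA A Y (D X Z)))
    (hDd4 : ∀ X Y Z T : E, Dd (0, wedgeA A X Y) (0, wedgeA A Z T) =
      (0, wedgeA A (R X Y Z) T + wedgeA A Z (R X Y T))) :
    (∀ U V : E × ⋀[A]^2 E, ρd (Dd U V - Dd V U) = ⁅ρd U, ρd V⁆) ↔
      (∀ X Y Z : E, ρ (R X Y Z) = 0) :=
  statement10_general ρ br br_anchor D D_torsionfree R ρd hρdadd hρdE hρdW Dd hDdaddl hDdaddr hDd1
    hDd2 hDd3 hDd4
end
end

section
/- Let (E, ρ, [·,·]) be an almost Lie algebroid, ∇ a torsion-free E-connection on E with curvature R, and ∇^(1), [·,·]_{E^(1)} the lifted connection and derived bracket on E^(1) = E ⊕ Λ²_A E. Write ∇_{X∧Y}Z := R(X,Y)Z. Then the curvature R^(1)(U,V)W = ∇^(1)_U ∇^(1)_V W − ∇^(1)_V ∇^(1)_U W − ∇^(1)_{[U,V]_{E^(1)}} W satisfies, for all X, X₁, X₂, Y, Y₁, Y₂, Z, T ∈ E: (1) R^(1)(X,Y)Z = 0 and R^(1)(X,Y)(Z∧T) = 0; (2) R^(1)(X₁∧X₂,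 Y)Z = ∇_{X₁∧X₂}∇_Y Z − ∇_Y ∇_{X₁∧X₂}Z − ∇_{∇_{X₁∧X₂}Y}Z + ∇_{∇_Y(X₁∧X₂)}Z; (3) R^(1)(X₁∧X₂, Y)(Z∧T) = R^(1)(X₁∧X₂,Y)Z ∧ T + Z ∧ R^(1)(X₁∧X₂,Y)T; (4) R^(1)(X₁∧X₂, Y₁∧Y₂)Z = ∇_{X₁∧X₂}∇_{Y₁∧Y₂}Z − ∇_{Y₁∧Y₂}∇_{X₁∧X₂}Z − ∇_{∇_{X₁∧X₂}(Y₁∧Y₂)}Z + ∇_{∇_{Y₁∧Y₂}(X₁∧X₂)}Z; (5) R^(1)(X₁∧X₂, Y₁∧Y₂)(Z∧T) = R^(1)(X₁∧X₂, Y₁∧Y₂)Z ∧ T + Z ∧ R^(1)(X₁∧X₂, Y₁∧Y₂)T. -/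
noncomputable section

set_option maxHeartbeats 1000000
set_option synthInstance.maxHeartbeats 400000

section WedgeLemmas
open ExteriorAlgebra
variable {A : Type*} [CommRing A] {E : Type*} [AddCommGroup E] [Module A E]

lemma wedgeA_val (X Y : E) : (wedgeA A X Y : ExteriorAlgebra A E) = ι A X * ι A Y := by
  simp [wedgeA, ExteriorAlgebra.ιMulti_apply, List.ofFn]

lemma wedgeA_addl (X X' Y : E) : wedgeA A (X + X') Y = wedgeA A X Y + wedgeA A X' Y := by
  apply Subtype.ext
  simp [wedgeA_val, map_add, add_mul]

lemma wedgeA_addr (X Y Y' : E) : wedgeA A X (Y + Y') = wedgeA A X Y + wedgeA A X Y' := by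
  apply Subtype.ext
  simp [wedgeA_val, map_add, mul_add]

lemma wedgeA_antisym (X Y : E) : wedgeA A Y X = - wedgeA A X Y := by
  apply Subtype.ext
  push_cast [wedgeA_val]
  rw [eq_neg_iff_add_eq_zero]
  exact ExteriorAlgebra.ι_add_mul_swap (R := A) Y X

lemma wedgeA_subl (X X' Y : E) : wedgeA A (X - X') Y = wedgeA A X Y - wedgeA A X' Y := by
  rw [eq_sub_iff_add_eq, ← wedgeA_addl, sub_add_cancel]

lemma wedgeA_subr (X Y Y' : E) : wedgeA A X (Y - Y') = wedgeA A X Y - wedgeA A X Y' := by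
  rw [eq_sub_iff_add_eq, ← wedgeA_addr, sub_add_cancel]

end WedgeLemmas

/-- With `(E, ρ, br)` an almost Lie algebroid, `D` a torsion-free
`E`-connection with curvature `R`, and `∇¹` the lifted connection on `E⁽¹⁾ = E ⊕ Λ²_A E`,
the curvature `R¹(U,V)W = ∇¹_U ∇¹_V W − ∇¹_V ∇¹_U W − ∇¹_{[U,V]} W` of `∇¹` satisfies the
five identities of Proposition `Prhelp01` (here `∇_{X∧Y}Z := R(X,Y)Z`, extended additively
over sums of wedges, and likewise on `Λ²`). -/
theorem statement11
    {A : Type*} [CommRing A] [Algebra ℝ A]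
    {E : Type*} [AddCommGroup E] [Module A E] [Module ℝ E] [IsScalarTower ℝ A E]
    (ρ : E →ₗ[A] Derivation ℝ A A) (br : E → E → E)
    (br_addl : ∀ X X' Y : E, br (X + X') Y = br X Y + br X' Y)
    (br_addr : ∀ X Y Y' : E, br X (Y + Y') = br X Y + br X Y')
    (br_smull : ∀ (c : ℝ) (X Y : E), br (c • X) Y = c • br X Y)
    (br_smulr : ∀ (c : ℝ) (X Y : E), br X (c • Y) = c • br X Y)
    (br_skew : ∀ X Y : E, br Y X = - br X Y)
    (br_leib : ∀ (f : A) (X Y : E), br X (f • Y) = ρ X f • Y + f • br X Y)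
    (br_anchor : ∀ X Y : E, ρ (br X Y) = ⁅ρ X, ρ Y⁆)
    (D : E → E → E)
    (D_addl : ∀ X X' Y : E, D (X + X') Y = D X Y + D X' Y)
    (D_smull : ∀ (f : A) (X Y : E), D (f • X) Y = f • D X Y)
    (D_addr : ∀ X Y Y' : E, D X (Y + Y') = D X Y + D X Y')
    (D_leib : ∀ (f : A) (X Y : E), D X (f • Y) = ρ X f • Y + f • D X Y)
    (D_torsionfree : ∀ X Y : E, D X Y - D Y X = br X Y)
    (R : E → E → E → E)
    (hR : ∀ X Y Z : E, R X Y Z = D X (D Y Z) - D Y (D X Z) - D (br X Y) Z)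
    (ρd : E × ⋀[A]^2 E → Derivation ℝ A A)
    (hρdadd : ∀ U V : E × ⋀[A]^2 E, ρd (U + V) = ρd U + ρd V)
    (hρdE : ∀ X : E, ρd (X, 0) = ρ X)
    (hρdW : ∀ X Y : E, ρd (0, wedgeA A X Y) = ⁅ρ X, ρ Y⁆ - ρ (br X Y))
    (Dd : E × ⋀[A]^2 E → E × ⋀[A]^2 E → E × ⋀[A]^2 E)
    (hDdaddl : ∀ U U' V : E × ⋀[A]^2 E, Dd (U + U') V = Dd U V + Dd U' V)
    (hDdaddr : ∀ U V V' : E × ⋀[A]^2 E, Dd U (V + V') = Dd U V + Dd U V')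
    (hDdsmull : ∀ (f : A) (U V : E × ⋀[A]^2 E), Dd (f • U) V = f • Dd U V)
    (hDdleib : ∀ (f : A) (U V : E × ⋀[A]^2 E), Dd U (f • V) = ρd U f • V + f • Dd U V)
    (hDd1 : ∀ X Y : E, Dd (X, 0) (Y, 0) = (D X Y, algebraMap ℝ A (1 / 2) • wedgeA A X Y))
    (hDd2 : ∀ X Y Z : E, Dd (0, wedgeA A X Y) (Z, 0) = (R X Y Z, 0))
    (hDd3 : ∀ X Y Z : E, Dd (X, 0) (0, wedgeA A Y Z) =
      (0, wedgeA A (D X Y) Z + wedgeA A Y (D X Z)))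
    (hDd4 : ∀ X Y Z T : E, Dd (0, wedgeA A X Y) (0, wedgeA A Z T) =
      (0, wedgeA A (R X Y Z) T + wedgeA A Z (R X Y T)))
    (R1 : E × ⋀[A]^2 E → E × ⋀[A]^2 E → E × ⋀[A]^2 E → E × ⋀[A]^2 E)
    (hR1 : ∀ U V W : E × ⋀[A]^2 E,
      R1 U V W = Dd U (Dd V W) - Dd V (Dd U W) - Dd (Dd U V - Dd V U) W) :
    (∀ X Y Z T : E,
      R1 (X, 0) (Y, 0) (Z, 0) = 0 ∧ R1 (X, 0) (Y, 0) (0, wedgeA A Z T) = 0) ∧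
    (∀ X₁ X₂ Y Z : E,
      R1 (0, wedgeA A X₁ X₂) (Y, 0) (Z, 0) =
        (R X₁ X₂ (D Y Z) - D Y (R X₁ X₂ Z) - D (R X₁ X₂ Y) Z
          + (R (D Y X₁) X₂ Z + R X₁ (D Y X₂) Z), 0)) ∧
    (∀ X₁ X₂ Y Z T : E,
      R1 (0, wedgeA A X₁ X₂) (Y, 0) (0, wedgeA A Z T) =
        (0, wedgeA A (R1 (0, wedgeA A X₁ X₂) (Y, 0) (Z, 0)).1 T
          + wedgeA A Z (R1 (0, wedgeA A X₁ X₂) (Y, 0) (T, 0)).1)) ∧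
    (∀ X₁ X₂ Y₁ Y₂ Z : E,
      R1 (0, wedgeA A X₁ X₂) (0, wedgeA A Y₁ Y₂) (Z, 0) =
        (R X₁ X₂ (R Y₁ Y₂ Z) - R Y₁ Y₂ (R X₁ X₂ Z)
          - (R (R X₁ X₂ Y₁) Y₂ Z + R Y₁ (R X₁ X₂ Y₂) Z)
          + (R (R Y₁ Y₂ X₁) X₂ Z + R X₁ (R Y₁ Y₂ X₂) Z), 0)) ∧
    (∀ X₁ X₂ Y₁ Y₂ Z T : E,
      R1 (0, wedgeA A X₁ X₂) (0, wedgeA A Y₁ Y₂) (0, wedgeA A Z T) =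
        (0, wedgeA A (R1 (0, wedgeA A X₁ X₂) (0, wedgeA A Y₁ Y₂) (Z, 0)).1 T
          + wedgeA A Z (R1 (0, wedgeA A X₁ X₂) (0, wedgeA A Y₁ Y₂) (T, 0)).1)) := by
  
  set c : A := algebraMap ℝ A (1 / 2) with hc
  have hcd : ∀ U : E × ⋀[A]^2 E, ρd U c = 0 := by
    intro U; rw [hc]; exact Derivation.map_algebraMap _ _
  have hcc : c + c = 1 := by
    rw [hc, ← map_add]
    norm_num
  have halfW : ∀ v : ⋀[A]^2 E, c • v + c • v = v := by
    intro v; rw [← add_smul, hcc, one_smul]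
  have Ddc : ∀ U V : E × ⋀[A]^2 E, Dd U (c • V) = c • Dd U V := by
    intro U V; rw [hDdleib, hcd, zero_smul, zero_add]
  have Dd0r : ∀ U : E × ⋀[A]^2 E, Dd U 0 = 0 := by
    intro U; have h := hDdaddr U 0 0
    rw [add_zero] at h
    exact left_eq_add.mp h
  have Dd0l : ∀ V : E × ⋀[A]^2 E, Dd 0 V = 0 := by
    intro V; have h := hDdaddl 0 0 V
    rw [add_zero] at h
    exact left_eq_add.mp h
  have Ddnegl : ∀ U V : E × ⋀[A]^2 E, Dd (-U) V = - Dd U V := by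
    intro U V; have h := hDdaddl U (-U) V
    rw [add_neg_cancel, Dd0l] at h
    exact eq_neg_of_add_eq_zero_right h.symm
  have Ddsubl : ∀ U V W : E × ⋀[A]^2 E, Dd (U - V) W = Dd U W - Dd V W := by
    intro U V W; rw [sub_eq_add_neg, hDdaddl, Ddnegl, ← sub_eq_add_neg]
  have splitr : ∀ (U : E × ⋀[A]^2 E) (a : E) (b : ⋀[A]^2 E),
      Dd U (a, b) = Dd U (a, 0) + Dd U (0, b) := by
    intro U a b; rw [← hDdaddr]; congr 1; simp
  have splitl : ∀ (a : E) (b : ⋀[A]^2 E) (V : E × ⋀[A]^2 E),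
      Dd (a, b) V = Dd (a, 0) V + Dd (0, b) V := by
    intro a b V; rw [← hDdaddl]; congr 1; simp
  have addW : ∀ (U : E × ⋀[A]^2 E) (u v : ⋀[A]^2 E),
      Dd U ((0 : E), u + v) = Dd U (0, u) + Dd U (0, v) := by
    intro U u v; rw [← hDdaddr]; congr 1; simp
  have addWl : ∀ (u v : ⋀[A]^2 E) (V : E × ⋀[A]^2 E),
      Dd ((0 : E), u + v) V = Dd (0, u) V + Dd (0, v) V := by
    intro u v V; rw [← hDdaddl]; congr 1; simp
  have csmul : ∀ u : ⋀[A]^2 E,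
      (((0 : E), c • u) : E × ⋀[A]^2 E) = c • (((0 : E), u) : E × ⋀[A]^2 E) := by
    intro u; simp
  have hB1 : ∀ X Y : E,
      Dd (X, (0 : ⋀[A]^2 E)) (Y, 0) - Dd (Y, 0) (X, 0) = (br X Y, wedgeA A X Y) := by
    intro X Y
    rw [hDd1, hDd1, Prod.mk_sub_mk]
    refine Prod.ext ?_ ?_
    · exact D_torsionfree X Y
    · show c • wedgeA A X Y - c • wedgeA A Y X = wedgeA A X Y
      rw [wedgeA_antisym X Y, smul_neg, sub_neg_eq_add, halfW]
  -- Part 2, stated as a `have` so parts 3 can use it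
  have P2 : ∀ X₁ X₂ Y Z : E,
      R1 (0, wedgeA A X₁ X₂) (Y, 0) (Z, 0) =
        (R X₁ X₂ (D Y Z) - D Y (R X₁ X₂ Z) - D (R X₁ X₂ Y) Z
          + (R (D Y X₁) X₂ Z + R X₁ (D Y X₂) Z), 0) := by
    intro X₁ X₂ Y Z
    rw [hR1, hDd1 Y Z, splitr _ (D Y Z) (c • wedgeA A Y Z), hDd2 X₁ X₂ (D Y Z),
      csmul (wedgeA A Y Z), Ddc, hDd4 X₁ X₂ Y Z,
      hDd2 X₁ X₂ Z, hDd1 Y (R X₁ X₂ Z),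
      hDd2 X₁ X₂ Y, hDd3 Y X₁ X₂, Ddsubl,
      hDd1 (R X₁ X₂ Y) Z,
      addWl (wedgeA A (D Y X₁) X₂) (wedgeA A X₁ (D Y X₂)) (Z, 0),
      hDd2 (D Y X₁) X₂ Z, hDd2 X₁ (D Y X₂) Z]
    simp only [Prod.smul_mk, smul_zero, smul_add, Prod.mk_add_mk, Prod.mk_sub_mk,
      Prod.mk.injEq]
    constructor
    · abel
    · abel
  -- Part 4, likewise
  have P4 : ∀ X₁ X₂ Y₁ Y₂ Z : E,
      R1 (0, wedgeA A X₁ X₂) (0, wedgeA A Y₁ Y₂) (Z, 0) =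
        (R X₁ X₂ (R Y₁ Y₂ Z) - R Y₁ Y₂ (R X₁ X₂ Z)
          - (R (R X₁ X₂ Y₁) Y₂ Z + R Y₁ (R X₁ X₂ Y₂) Z)
          + (R (R Y₁ Y₂ X₁) X₂ Z + R X₁ (R Y₁ Y₂ X₂) Z), 0) := by
    intro X₁ X₂ Y₁ Y₂ Z
    rw [hR1, hDd2 Y₁ Y₂ Z, hDd2 X₁ X₂ (R Y₁ Y₂ Z),
      hDd2 X₁ X₂ Z, hDd2 Y₁ Y₂ (R X₁ X₂ Z),
      hDd4 X₁ X₂ Y₁ Y₂, hDd4 Y₁ Y₂ X₁ X₂, Ddsubl,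
      addWl (wedgeA A (R X₁ X₂ Y₁) Y₂) (wedgeA A Y₁ (R X₁ X₂ Y₂)) (Z, 0),
      hDd2 (R X₁ X₂ Y₁) Y₂ Z, hDd2 Y₁ (R X₁ X₂ Y₂) Z,
      addWl (wedgeA A (R Y₁ Y₂ X₁) X₂) (wedgeA A X₁ (R Y₁ Y₂ X₂)) (Z, 0),
      hDd2 (R Y₁ Y₂ X₁) X₂ Z, hDd2 X₁ (R Y₁ Y₂ X₂) Z]
    simp only [Prod.mk_add_mk, Prod.mk_sub_mk, Prod.mk.injEq]
    constructor
    · abel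
    · abel
  refine ⟨?_, P2, ?_, P4, ?_⟩
  · -- Part 1
    intro X Y Z T
    constructor
    · rw [hR1, hDd1 Y Z, splitr _ (D Y Z) (c • wedgeA A Y Z), hDd1 X (D Y Z),
        csmul (wedgeA A Y Z), Ddc, hDd3 X Y Z,
        hDd1 X Z, splitr _ (D X Z) (c • wedgeA A X Z), hDd1 Y (D X Z),
        csmul (wedgeA A X Z), Ddc, hDd3 Y X Z,
        hB1 X Y, splitl (br X Y) (wedgeA A X Y) (Z, 0), hDd1 (br X Y) Z, hDd2 X Y Z,
        hR X Y Z, ← D_torsionfree X Y, wedgeA_subl (D X Y) (D Y X) Z]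
      simp only [Prod.smul_mk, smul_zero, smul_add, smul_sub, Prod.mk_add_mk,
        Prod.mk_sub_mk, Prod.mk_eq_zero]
      constructor
      · abel
      · abel
    · rw [hR1, hDd3 Y Z T, addW _ (wedgeA A (D Y Z) T) (wedgeA A Z (D Y T)),
        hDd3 X (D Y Z) T, hDd3 X Z (D Y T),
        hDd3 X Z T, addW _ (wedgeA A (D X Z) T) (wedgeA A Z (D X T)),
        hDd3 Y (D X Z) T, hDd3 Y Z (D X T),
        hB1 X Y, splitl (br X Y) (wedgeA A X Y) (0, wedgeA A Z T),
        hDd3 (br X Y) Z T, hDd4 X Y Z T,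
        hR X Y Z, hR X Y T, ← D_torsionfree X Y]
      simp only [wedgeA_subl, wedgeA_subr, Prod.mk_add_mk, Prod.mk_sub_mk,
        Prod.mk_eq_zero]
      constructor
      · abel
      · abel
  · -- Part 3
    intro X₁ X₂ Y Z T
    rw [P2 X₁ X₂ Y Z, P2 X₁ X₂ Y T]
    rw [hR1, hDd3 Y Z T, addW _ (wedgeA A (D Y Z) T) (wedgeA A Z (D Y T)),
      hDd4 X₁ X₂ (D Y Z) T, hDd4 X₁ X₂ Z (D Y T),
      hDd4 X₁ X₂ Z T, addW _ (wedgeA A (R X₁ X₂ Z) T) (wedgeA A Z (R X₁ X₂ T)),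
      hDd3 Y (R X₁ X₂ Z) T, hDd3 Y Z (R X₁ X₂ T),
      hDd2 X₁ X₂ Y, hDd3 Y X₁ X₂, Ddsubl,
      hDd3 (R X₁ X₂ Y) Z T,
      addWl (wedgeA A (D Y X₁) X₂) (wedgeA A X₁ (D Y X₂)) (0, wedgeA A Z T),
      hDd4 (D Y X₁) X₂ Z T, hDd4 X₁ (D Y X₂) Z T]
    simp only [wedgeA_addl, wedgeA_addr, wedgeA_subl, wedgeA_subr, Prod.mk_add_mk,
      Prod.mk_sub_mk, Prod.mk.injEq]
    constructor
    · abel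
    · abel
  · -- Part 5
    intro X₁ X₂ Y₁ Y₂ Z T
    rw [P4 X₁ X₂ Y₁ Y₂ Z, P4 X₁ X₂ Y₁ Y₂ T]
    rw [hR1, hDd4 Y₁ Y₂ Z T, addW _ (wedgeA A (R Y₁ Y₂ Z) T) (wedgeA A Z (R Y₁ Y₂ T)),
      hDd4 X₁ X₂ (R Y₁ Y₂ Z) T, hDd4 X₁ X₂ Z (R Y₁ Y₂ T),
      hDd4 X₁ X₂ Z T, addW _ (wedgeA A (R X₁ X₂ Z) T) (wedgeA A Z (R X₁ X₂ T)),
      hDd4 Y₁ Y₂ (R X₁ X₂ Z) T, hDd4 Y₁ Y₂ Z (R X₁ X₂ T),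
      hDd4 X₁ X₂ Y₁ Y₂, hDd4 Y₁ Y₂ X₁ X₂, Ddsubl,
      addWl (wedgeA A (R X₁ X₂ Y₁) Y₂) (wedgeA A Y₁ (R X₁ X₂ Y₂)) (0, wedgeA A Z T),
      hDd4 (R X₁ X₂ Y₁) Y₂ Z T, hDd4 Y₁ (R X₁ X₂ Y₂) Z T,
      addWl (wedgeA A (R Y₁ Y₂ X₁) X₂) (wedgeA A X₁ (R Y₁ Y₂ X₂)) (0, wedgeA A Z T),
      hDd4 (R Y₁ Y₂ X₁) X₂ Z T, hDd4 X₁ (R Y₁ Y₂ X₂) Z T]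
    simp only [wedgeA_addl, wedgeA_addr, wedgeA_subl, wedgeA_subr, Prod.mk_add_mk,
      Prod.mk_sub_mk, Prod.mk.injEq]
    constructor
    · abel
    · abel
end
end
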